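/- Let ℓ ≥ 3 and m ≥ 1 be integers, and for 0 ≤ i < m let C_i = C(2πi/(ℓm)) be the regular ℓ-gon circumscribed about the unit circle rotated by 2πi/(ℓm). Then the set of vertices of the subdivision of ℝ² induced by C_0, …, C_{m−1} has exactly ℓ·m² elements. -/

import Mathlib

open Set

noncomputable section

def IsClosedHalfspace (V : Type*) [AddCommGroup V] [Module ℝ V] (h : Set V) : Prop :=
  ∃ (f : V →ₗ[ℝ] ℝ) (a : ℝ), f ≠ 0 ∧ h = {x | f x ≤ a}

def IsPolyhedron (V : Type*) [AddCommGroup V] [Module ℝ V] (P : Set V) : Prop :=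
  ∃ (k : ℕ) (H : Fin k → Set V), (∀ i, IsClosedHalfspace V (H i)) ∧ P = ⋂ i, H i

def minFace {V : Type*} [AddCommGroup V] [Module ℝ V] (P : Set V) (p : V) : Set V :=
  P ∩ ⋂ (f : V →ₗ[ℝ] ℝ) (a : ℝ) (_ : f ≠ 0) (_ : f p = a) (_ : P ⊆ {x | f x ≤ a}),
    {x | f x = a}

def IsSubdivVertex {V : Type*} [AddCommGroup V] [Module ℝ V] {ι : Type*}
    (P : ι → Set V) (p : V) : Prop :=
  (⋂ j ∈ {j | p ∈ P j}, minFace (P j) p) = {p}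

def Cgon (ℓ : ℕ) (φ : ℝ) : Set (ℝ × ℝ) :=
  ⋂ k ∈ Finset.range ℓ, {x : ℝ × ℝ |
    Real.cos (2 * Real.pi * k / ℓ + φ) * x.1 + Real.sin (2 * Real.pi * k / ℓ + φ) * x.2 ≤ 1}

----------------------------------------------------------------------
-- basics
----------------------------------------------------------------------

/-- the linear functional `x ↦ cos c * x.1 + sin c * x.2` -/
def lf (c : ℝ) : (ℝ × ℝ) →ₗ[ℝ] ℝ :=
  Real.cos c • LinearMap.fst ℝ ℝ ℝ + Real.sin c • LinearMap.snd ℝ ℝ ℝ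

lemma lf_apply (c : ℝ) (p : ℝ × ℝ) : lf c p = Real.cos c * p.1 + Real.sin c * p.2 := rfl

lemma lf_ne_zero (c : ℝ) : lf c ≠ 0 := by
  intro h
  have h2 := congrArg (fun f : (ℝ × ℝ) →ₗ[ℝ] ℝ => f (Real.cos c, Real.sin c)) h
  simp only [lf_apply, LinearMap.zero_apply] at h2
  nlinarith [Real.sin_sq_add_cos_sq c]

lemma lf_periodic (c : ℝ) (t : ℤ) : lf (c + t * (2 * Real.pi)) = lf c := by
  unfold lf
  rw [Real.cos_add_int_mul_two_pi, Real.sin_add_int_mul_two_pi]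

lemma mem_Cgon_iff {ℓ : ℕ} {φ : ℝ} {p : ℝ × ℝ} :
    p ∈ Cgon ℓ φ ↔ ∀ k < ℓ, lf (2 * Real.pi * k / ℓ + φ) p ≤ 1 := by
  simp [Cgon, lf_apply, Set.mem_iInter]

lemma Cgon_subset {ℓ : ℕ} {φ : ℝ} {k : ℕ} (hk : k < ℓ) :
    Cgon ℓ φ ⊆ {x | lf (2 * Real.pi * k / ℓ + φ) x ≤ 1} := by
  intro x hx
  exact mem_Cgon_iff.1 hx k hk

/-- any integer rotate of a side constraint holds -/
lemma Cgon_le_int {ℓ : ℕ} (hℓ : 0 < ℓ) {φ : ℝ} {p : ℝ × ℝ} (hp : p ∈ Cgon ℓ φ) (t : ℤ) :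
    lf (2 * Real.pi * t / ℓ + φ) p ≤ 1 := by
  have h := mem_Cgon_iff.1 hp (t % ℓ).toNat (by
    have h1 : (0:ℤ) ≤ t % ℓ := Int.emod_nonneg t (by exact_mod_cast hℓ.ne')
    have h2 : t % ℓ < ℓ := Int.emod_lt_of_pos t (by exact_mod_cast hℓ)
    omega)
  have key : 2 * Real.pi * t / ℓ + φ = 2 * Real.pi * ((t % ℓ).toNat : ℝ) / ℓ + φ + (t / ℓ : ℤ) * (2 * Real.pi) := by
    have h1 : (0:ℤ) ≤ t % ℓ := Int.emod_nonneg t (by exact_mod_cast hℓ.ne')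
    have ht : (t : ℝ) = ((t % ℓ).toNat : ℝ) + (t / ℓ : ℤ) * (ℓ : ℝ) := by
      have h3 : t = ((t % ℓ).toNat : ℤ) + (t / ℓ) * (ℓ : ℤ) := by
        rw [Int.toNat_of_nonneg h1]
        linear_combination -Int.emod_add_mul_ediv t ℓ
      exact_mod_cast congrArg (Int.cast : ℤ → ℝ) h3
    have hℓ' : (ℓ : ℝ) ≠ 0 := by exact_mod_cast hℓ.ne'
    rw [ht]
    field_simp
    ring
  rw [key, lf_periodic]
  exact h

lemma mem_minFace_self {V : Type*} [AddCommGroup V] [Module ℝ V] {P : Set V} {p : V}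
    (hp : p ∈ P) : p ∈ minFace P p := by
  refine ⟨hp, ?_⟩
  simp only [Set.mem_iInter]
  intro f a _ hfp _
  exact hfp

lemma minFace_subset_hyperplane {V : Type*} [AddCommGroup V] [Module ℝ V] {P : Set V} {p : V}
    {f : V →ₗ[ℝ] ℝ} {a : ℝ} (hf : f ≠ 0) (hfp : f p = a) (hP : P ⊆ {x | f x ≤ a}) :
    minFace P p ⊆ {x | f x = a} := by
  intro x hx
  have := hx.2
  simp only [Set.mem_iInter] at this
  exact this f a hf hfp hP

lemma mem_minFace_of_openSegment {V : Type*} [AddCommGroup V] [Module ℝ V] {P : Set V}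
    {p x y : V} (hx : x ∈ P) (hy : y ∈ P) (hp : p ∈ openSegment ℝ x y) :
    x ∈ minFace P p := by
  refine ⟨hx, ?_⟩
  simp only [Set.mem_iInter]
  intro f a _ hfp hP
  obtain ⟨s, t, hs, ht, hst, hxy⟩ := hp
  have hfx : f x ≤ a := hP hx
  have hfy : f y ≤ a := hP hy
  have : s * f x + t * f y = a := by
    rw [← hfp, ← hxy]; simp [map_add, map_smul]
  by_contra hne
  have hne' : f x ≠ a := hne
  have hlt : f x < a := lt_of_le_of_ne hfx hne'
  have h1 : s * f x < s * a := by exact mul_lt_mul_of_pos_left hlt hs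
  have h2 : t * f y ≤ t * a := mul_le_mul_of_nonneg_left hfy ht.le
  have h3 : s * a + t * a = a := by rw [← add_mul, hst, one_mul]
  linarith


----------------------------------------------------------------------
-- trigonometry and the candidate points
----------------------------------------------------------------------

open Real

lemma cos_le_cos_aux {s r : ℝ} (hs : 0 ≤ s) (hsr : s ≤ r) (hr : r ≤ 2*π - s) :
    cos r ≤ cos s := by
  rcases le_or_gt r π with h | h
  · exact Real.cos_le_cos_of_nonneg_of_le_pi hs h hsr
  · have h1 : cos r = cos (2*π - r) := (Real.cos_two_pi_sub r).symm
    rw [h1]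
    exact Real.cos_le_cos_of_nonneg_of_le_pi hs (by linarith) (by linarith)

/-- The intersection point of the tangent lines at angles `2*e*j` and `2*e*(j+s)`. -/
def pt (e j s : ℝ) : ℝ × ℝ :=
  (cos (e*(2*j+s)) / cos (e*s), sin (e*(2*j+s)) / cos (e*s))

lemma lf_pt (e c j s : ℝ) (h : cos (e*s) ≠ 0) :
    lf (2*e*c) (pt e j s) = cos (e*(2*j+s) - 2*e*c) / cos (e*s) := by
  simp only [lf_apply, pt]
  rw [Real.cos_sub]
  field_simp

lemma lf_ker_inj {α γ : ℝ} (h : sin (γ - α) ≠ 0) {v : ℝ × ℝ}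
    (h1 : lf α v = 0) (h2 : lf γ v = 0) : v = 0 := by
  simp only [lf_apply] at h1 h2
  have hd := Real.sin_sub γ α
  have e1 : v.1 * sin (γ - α) = 0 := by
    rw [hd]; linear_combination (sin γ) * h1 - (sin α) * h2
  have e2 : v.2 * sin (γ - α) = 0 := by
    rw [hd]; linear_combination (cos α) * h2 - (cos γ) * h1
  have hv1 : v.1 = 0 := by
    rcases mul_eq_zero.1 e1 with h' | h'
    · exact h'
    · exact absurd h' h
  have hv2 : v.2 = 0 := by
    rcases mul_eq_zero.1 e2 with h' | h'
    · exact h'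
    · exact absurd h' h
  exact Prod.ext hv1 hv2

lemma lf_pt_fst (e j s : ℝ) (h : cos (e*s) ≠ 0) : lf (2*e*j) (pt e j s) = 1 := by
  rw [lf_pt e j j s h]
  have : e*(2*j+s) - 2*e*j = e*s := by ring
  rw [this, div_self h]

lemma lf_pt_snd (e j s : ℝ) (h : cos (e*s) ≠ 0) : lf (2*e*(j+s)) (pt e j s) = 1 := by
  rw [lf_pt e (j+s) j s h]
  have : e*(2*j+s) - 2*e*(j+s) = -(e*s) := by ring
  rw [this, Real.cos_neg, div_self h]

lemma eq_pt_of_two_lines {e j s : ℝ} {x : ℝ × ℝ} (hsin : sin (e*s) ≠ 0) (hcos : cos (e*s) ≠ 0)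
    (h1 : lf (2*e*j) x = 1) (h2 : lf (2*e*(j+s)) x = 1) : x = pt e j s := by
  have hp1 := lf_pt_fst e j s hcos
  have hp2 := lf_pt_snd e j s hcos
  have hdiff : sin (2*e*(j+s) - 2*e*j) ≠ 0 := by
    have : 2*e*(j+s) - 2*e*j = 2*(e*s) := by ring
    rw [this, Real.sin_two_mul]
    exact mul_ne_zero (mul_ne_zero two_ne_zero hsin) hcos
  have k1 : lf (2*e*j) (x - pt e j s) = 0 := by rw [map_sub, h1, hp1, sub_self]
  have k2 : lf (2*e*(j+s)) (x - pt e j s) = 0 := by rw [map_sub, h2, hp2, sub_self]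
  have := lf_ker_inj hdiff k1 k2
  exact sub_eq_zero.1 this

----------------------------------------------------------------------
-- membership of the candidate points in the polygons
----------------------------------------------------------------------

section Main

variable {ℓ m : ℕ} (hℓ : 3 ≤ ℓ) (hm : 1 ≤ m)

lemma N_pos (hℓ : 3 ≤ ℓ) (hm : 1 ≤ m) : 0 < ℓ * m := by positivity

lemma NR_pos (hℓ : 3 ≤ ℓ) (hm : 1 ≤ m) : (0:ℝ) < (ℓ:ℝ) * m := by
  have := N_pos hℓ hm; exact_mod_cast this

lemma e_pos (hℓ : 3 ≤ ℓ) (hm : 1 ≤ m) : 0 < π / ((ℓ:ℝ) * m) :=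
  div_pos Real.pi_pos (NR_pos hℓ hm)

/-- `cos (e*s) > 0` for `0 < s`, `2*s < ℓ*m`. -/
lemma cos_es_pos (hℓ : 3 ≤ ℓ) (hm : 1 ≤ m) {s : ℤ} (hs1 : 1 ≤ s) (hs2 : 2*s < ℓ*m) :
    0 < cos (π / ((ℓ:ℝ) * m) * s) := by
  apply Real.cos_pos_of_mem_Ioo
  have he := e_pos hℓ hm
  have hN := NR_pos hℓ hm
  constructor
  · have : (0:ℝ) < π / ((ℓ:ℝ)*m) * s := by
      apply mul_pos he; exact_mod_cast hs1
    nlinarith [Real.pi_pos]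
  · have hsr : (s:ℝ) * 2 < (ℓ:ℝ)*m := by
      have : s * 2 < ((ℓ:ℤ) * m) := by linarith
      exact_mod_cast this
    calc π / ((ℓ:ℝ) * m) * s < π / ((ℓ:ℝ)*m) * (((ℓ:ℝ)*m)/2) := by
            apply mul_lt_mul_of_pos_left _ he
            linarith
      _ = π/2 := by field_simp
  
lemma sin_es_pos (hℓ : 3 ≤ ℓ) (hm : 1 ≤ m) {s : ℤ} (hs1 : 1 ≤ s) (hs2 : s < ℓ*m) :
    0 < sin (π / ((ℓ:ℝ) * m) * s) := by
  apply Real.sin_pos_of_pos_of_lt_pi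
  · apply mul_pos (e_pos hℓ hm); exact_mod_cast hs1
  · have hN := NR_pos hℓ hm
    have hsr : (s:ℝ) < (ℓ:ℝ)*m := by exact_mod_cast hs2
    calc π / ((ℓ:ℝ) * m) * s < π / ((ℓ:ℝ)*m) * ((ℓ:ℝ)*m) := by
            apply mul_lt_mul_of_pos_left hsr (e_pos hℓ hm)
      _ = π := by field_simp

/-- the core cosine estimate, one-sided version -/
lemma cos_peri₁ (hℓ : 3 ≤ ℓ) (hm : 1 ≤ m) {s : ℤ} (hs1 : 1 ≤ s) (hs2 : s ≤ m) (A : ℤ)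
    (hA : ∃ u : ℤ, A = s + 2*m*u) :
    cos (π/((ℓ:ℝ)*m) * A) ≤ cos (π/((ℓ:ℝ)*m) * s) := by
  have hN := NR_pos hℓ hm
  have he := e_pos hℓ hm
  obtain ⟨u, hu⟩ := hA
  set q : ℤ := u / ℓ with hq
  set u' : ℤ := u % ℓ with hu'
  have hdm : (ℓ:ℤ) * q + u' = u := Int.mul_ediv_add_emod u ℓ
  have hu'0 : 0 ≤ u' := Int.emod_nonneg u (by positivity)
  have hu'1 : u' ≤ (ℓ:ℤ) - 1 := by
    have := Int.emod_lt_of_pos u (by positivity : (0:ℤ) < (ℓ:ℤ)); omega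
  set w : ℤ := s + 2*m*u' with hw
  have hAw : A = w + 2*((ℓ:ℤ)*m)*q := by
    rw [hu, hw]; linear_combination (2*(m:ℤ)) * hdm.symm
  have hw1 : s ≤ w := by
    have : 0 ≤ 2*(m:ℤ)*u' := by positivity
    omega
  have hw2 : w + s ≤ 2*((ℓ:ℤ)*m) := by
    have h3 : (m:ℤ)*u' ≤ (m:ℤ)*((ℓ:ℤ)-1) := by
      apply mul_le_mul_of_nonneg_left hu'1 (by positivity)
    have h4 : (m:ℤ)*((ℓ:ℤ)-1) = (ℓ:ℤ)*m - m := by ring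
    rw [hw]
    linarith
  -- pass to reals
  have key : π/((ℓ:ℝ)*m) * A = π/((ℓ:ℝ)*m) * w + q * (2*π) := by
    have hAr : (A:ℝ) = (w:ℝ) + 2*((ℓ:ℝ)*m)*q := by exact_mod_cast congrArg (Int.cast : ℤ → ℝ) hAw
    rw [hAr]
    field_simp
  rw [key, Real.cos_add_int_mul_two_pi]
  apply cos_le_cos_aux
  · positivity
  · apply mul_le_mul_of_nonneg_left _ he.le
    exact_mod_cast hw1
  · have h4 : π/((ℓ:ℝ)*m) * w + π/((ℓ:ℝ)*m) * s ≤ π/((ℓ:ℝ)*m) * (2*((ℓ:ℝ)*m)) := by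
      rw [← mul_add]
      apply mul_le_mul_of_nonneg_left _ he.le
      exact_mod_cast hw2
    have h5 : π/((ℓ:ℝ)*m) * (2*((ℓ:ℝ)*m)) = 2*π := by field_simp
    linarith

/-- the core cosine estimate -/
lemma cos_peri (hℓ : 3 ≤ ℓ) (hm : 1 ≤ m) {s : ℤ} (hs1 : 1 ≤ s) (hs2 : s ≤ m) (A : ℤ)
    (hA : ∃ u : ℤ, A = s + 2*m*u ∨ A = -s + 2*m*u) :
    cos (π/((ℓ:ℝ)*m) * A) ≤ cos (π/((ℓ:ℝ)*m) * s) := by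
  obtain ⟨u, hu | hu⟩ := hA
  · exact cos_peri₁ hℓ hm hs1 hs2 A ⟨u, hu⟩
  · have h1 : π/((ℓ:ℝ)*m) * A = -(π/((ℓ:ℝ)*m) * ((-A : ℤ) : ℝ)) := by push_cast; ring
    rw [h1, Real.cos_neg]
    apply cos_peri₁ hℓ hm hs1 hs2
    exact ⟨-u, by linear_combination -hu⟩

lemma angle_eq (hℓ : 3 ≤ ℓ) (hm : 1 ≤ m) (k : ℕ) (c : ℝ) :
    2*π*(k:ℝ)/(ℓ:ℝ) + 2*π*c/((ℓ:ℝ)*m) = 2*(π/((ℓ:ℝ)*m))*((k:ℝ)*m + c) := by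
  have h1 : (ℓ:ℝ) ≠ 0 := by positivity
  have h2 : (m:ℝ) ≠ 0 := by
    have h0 : (0:ℝ) < m := by exact_mod_cast hm
    exact h0.ne'
  field_simp

lemma pt_mem_Cgon (hℓ : 3 ≤ ℓ) (hm : 1 ≤ m) {j s i : ℤ} (hs1 : 1 ≤ s) (hs2 : s ≤ m)
    (h : (∃ t : ℤ, j - i = t*m) ∨ (∃ t : ℤ, j + s - i = t*m)) :
    pt (π/((ℓ:ℝ)*m)) (j:ℝ) (s:ℝ) ∈ Cgon ℓ (2*π*(i:ℝ)/((ℓ:ℝ)*m)) := by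
  have hcs : 0 < cos (π/((ℓ:ℝ)*m) * (s:ℝ)) := by
    apply cos_es_pos hℓ hm hs1
    have h2 : (2:ℤ) < ℓ := by exact_mod_cast hℓ
    have h0 : (0:ℤ) < m := by exact_mod_cast hm
    have h3 : (2:ℤ) * m < (ℓ:ℤ) * m := mul_lt_mul_of_pos_right h2 h0
    linarith
  rw [mem_Cgon_iff]
  intro k hk
  have hang := angle_eq hℓ hm (ℓ := ℓ) (m := m) k (i:ℝ)
  have hang2 : (k:ℝ)*(m:ℝ) + (i:ℝ) = (((k:ℤ)*m + i : ℤ) : ℝ) := by push_cast; ring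
  rw [hang, hang2, lf_pt _ _ _ _ hcs.ne']
  rw [div_le_one hcs]
  have harg : π/((ℓ:ℝ)*m)*(2*(j:ℝ)+(s:ℝ)) - 2*(π/((ℓ:ℝ)*m))*(((k:ℤ)*m + i : ℤ) : ℝ)
      = π/((ℓ:ℝ)*m) * (((2*j + s - 2*((k:ℤ)*m + i) : ℤ)) : ℝ) := by
    push_cast
    ring
  rw [harg]
  apply cos_peri hℓ hm hs1 hs2
  obtain ⟨t, ht⟩ | ⟨t, ht⟩ := h
  · exact ⟨t - k, Or.inl (by linear_combination 2*ht)⟩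
  · exact ⟨t - k, Or.inr (by linear_combination 2*ht)⟩

lemma cos_es_pos' (hℓ : 3 ≤ ℓ) (hm : 1 ≤ m) {s : ℕ} (hs1 : 1 ≤ s) (hs2 : s ≤ m) :
    0 < cos (π/((ℓ:ℝ)*m) * (s:ℝ)) := by
  have h := cos_es_pos hℓ hm (s := (s:ℤ)) (by exact_mod_cast hs1) (by
    have h2 : (2:ℤ) < ℓ := by exact_mod_cast hℓ
    have h0 : (0:ℤ) < m := by exact_mod_cast hm
    have hs2' : (s:ℤ) ≤ m := by exact_mod_cast hs2
    nlinarith)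
  push_cast at h
  exact h

lemma sin_es_pos' (hℓ : 3 ≤ ℓ) (hm : 1 ≤ m) {s : ℕ} (hs1 : 1 ≤ s) (hs2 : s ≤ m) :
    0 < sin (π/((ℓ:ℝ)*m) * (s:ℝ)) := by
  have h := sin_es_pos hℓ hm (s := (s:ℤ)) (by exact_mod_cast hs1) (by
    have h2 : (2:ℤ) < ℓ := by exact_mod_cast hℓ
    have h0 : (0:ℤ) < m := by exact_mod_cast hm
    have hs2' : (s:ℤ) ≤ m := by exact_mod_cast hs2
    nlinarith)
  push_cast at h
  exact h

theorem pt_isVertex (hℓ : 3 ≤ ℓ) (hm : 1 ≤ m) {j s : ℕ} (hj : j < ℓ*m) (hs1 : 1 ≤ s)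
    (hs2 : s ≤ m) :
    IsSubdivVertex (fun i : Fin m => Cgon ℓ (2 * π * (i : ℕ) / (ℓ * m)))
      (pt (π/((ℓ:ℝ)*m)) (j:ℝ) (s:ℝ)) := by
  have hm0 : 0 < m := hm
  have hcs := cos_es_pos' hℓ hm hs1 hs2
  have hsin := sin_es_pos' hℓ hm hs1 hs2
  set e : ℝ := π/((ℓ:ℝ)*m) with he
  set p : ℝ × ℝ := pt e (j:ℝ) (s:ℝ) with hp
  -- the two tangent line indices
  have h₁ : p ∈ Cgon ℓ (2*π*((j % m : ℕ):ℝ)/((ℓ:ℝ)*m)) := by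
    have hdm : (m:ℤ) * ((j/m : ℕ):ℤ) + ((j % m : ℕ):ℤ) = (j:ℤ) := by
      exact_mod_cast Nat.div_add_mod j m
    have := pt_mem_Cgon (ℓ := ℓ) (m := m) hℓ hm (j := (j:ℤ)) (s := (s:ℤ))
      (i := ((j % m : ℕ):ℤ)) (by exact_mod_cast hs1) (by exact_mod_cast hs2)
      (Or.inl ⟨((j/m : ℕ):ℤ), by linarith⟩)
    push_cast at this ⊢
    exact this
  have h₂ : p ∈ Cgon ℓ (2*π*(((j+s) % m : ℕ):ℝ)/((ℓ:ℝ)*m)) := by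
    have hdm : (m:ℤ) * (((j+s)/m : ℕ):ℤ) + (((j+s) % m : ℕ):ℤ) = ((j:ℤ)+(s:ℤ)) := by
      exact_mod_cast Nat.div_add_mod (j+s) m
    have := pt_mem_Cgon (ℓ := ℓ) (m := m) hℓ hm (j := (j:ℤ)) (s := (s:ℤ))
      (i := (((j+s) % m : ℕ):ℤ)) (by exact_mod_cast hs1) (by exact_mod_cast hs2)
      (Or.inr ⟨(((j+s)/m : ℕ):ℤ), by linarith⟩)
    push_cast at this ⊢
    exact this
  set i₁ : Fin m := ⟨j % m, Nat.mod_lt _ hm0⟩ with hi₁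
  set i₂ : Fin m := ⟨(j+s) % m, Nat.mod_lt _ hm0⟩ with hi₂
  unfold IsSubdivVertex
  apply Set.eq_singleton_iff_unique_mem.mpr
  constructor
  · simp only [Set.mem_iInter]
    intro i hi
    exact mem_minFace_self hi
  · intro x hx
    simp only [Set.mem_iInter] at hx
    have hx₁ := hx i₁ h₁
    have hx₂ := hx i₂ h₂
    -- the first line
    have hk₁ : j / m < ℓ := Nat.div_lt_of_lt_mul (by linarith [Nat.mul_comm ℓ m])
    have hθ₁ : 2*π*((j/m : ℕ):ℝ)/(ℓ:ℝ) + 2*π*((j % m : ℕ):ℝ)/((ℓ:ℝ)*m) = 2*e*(j:ℝ) := by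
      rw [angle_eq hℓ hm]
      have : ((j/m : ℕ):ℝ)*(m:ℝ) + ((j % m : ℕ):ℝ) = (j:ℝ) := by
        exact_mod_cast Nat.div_add_mod' j m
      rw [this]
    have l1 : lf (2*e*(j:ℝ)) x = 1 := by
      have hsub := minFace_subset_hyperplane (P := Cgon ℓ (2*π*((j % m : ℕ):ℝ)/((ℓ:ℝ)*m)))
        (p := p) (f := lf (2*π*((j/m : ℕ):ℝ)/(ℓ:ℝ) + 2*π*((j % m : ℕ):ℝ)/((ℓ:ℝ)*m)))
        (a := 1) (lf_ne_zero _) (by rw [hθ₁]; exact lf_pt_fst e (j:ℝ) (s:ℝ) hcs.ne')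
        (Cgon_subset hk₁)
      have := hsub hx₁
      rw [← hθ₁]
      exact this
    -- the second line
    set j₂ : ℕ := (j+s) % (ℓ*m) with hj₂
    have hj₂m : j₂ % m = (j+s) % m := Nat.mod_mod_of_dvd _ ⟨ℓ, (Nat.mul_comm ℓ m)⟩
    have hk₂ : j₂ / m < ℓ := Nat.div_lt_of_lt_mul (by
      rw [Nat.mul_comm]
      exact Nat.mod_lt _ (show 0 < ℓ*m by positivity))
    have hNe : 2*e*((ℓ*m : ℕ):ℝ) = 2*π := by
      rw [he]
      have : ((ℓ*m : ℕ):ℝ) = (ℓ:ℝ)*m := by push_cast; ring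
      rw [this]
      field_simp
    have hlf2 : lf (2*e*((j:ℝ)+(s:ℝ))) = lf (2*e*(j₂:ℝ)) := by
      set t : ℕ := (j+s)/(ℓ*m) with htdef
      have hdm : j₂ + (ℓ*m) * t = j + s := Nat.mod_add_div (j+s) (ℓ*m)
      have harg : 2*e*((j:ℝ)+(s:ℝ)) = 2*e*(j₂:ℝ) + ((t:ℤ)) * (2*π) := by
        have hdm' : (j₂:ℝ) + ((ℓ*m : ℕ):ℝ) * (t:ℝ) = (j:ℝ) + (s:ℝ) := by
          exact_mod_cast hdm
        rw [← hdm', ← hNe]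
        push_cast
        ring
      rw [harg, lf_periodic]
    have hθ₂ : 2*π*((j₂/m : ℕ):ℝ)/(ℓ:ℝ) + 2*π*(((j+s) % m : ℕ):ℝ)/((ℓ:ℝ)*m) = 2*e*(j₂:ℝ) := by
      rw [angle_eq hℓ hm]
      have : ((j₂/m : ℕ):ℝ)*(m:ℝ) + (((j+s) % m : ℕ):ℝ) = (j₂:ℝ) := by
        rw [← hj₂m]
        exact_mod_cast Nat.div_add_mod' j₂ m
      rw [this]
    have l2 : lf (2*e*((j:ℝ)+(s:ℝ))) x = 1 := by
      have hsub := minFace_subset_hyperplane (P := Cgon ℓ (2*π*(((j+s) % m : ℕ):ℝ)/((ℓ:ℝ)*m)))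
        (p := p) (f := lf (2*π*((j₂/m : ℕ):ℝ)/(ℓ:ℝ) + 2*π*(((j+s) % m : ℕ):ℝ)/((ℓ:ℝ)*m)))
        (a := 1) (lf_ne_zero _) (by
          rw [hθ₂, ← hlf2]
          exact lf_pt_snd e (j:ℝ) (s:ℝ) hcs.ne')
        (Cgon_subset hk₂)
      have := hsub hx₂
      rw [hlf2]
      rw [← hθ₂]
      exact this
    exact eq_pt_of_two_lines hsin.ne' hcs.ne' l1 l2

/-- If `p` lies on the tangent lines with indices `b` and `b+d` (`0 < 2d < ℓm`) and within
the halfspace of index `b+m`, then `d ≤ m` and `p` is the corresponding candidate point. -/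
lemma core_cross (hℓ : 3 ≤ ℓ) (hm : 1 ≤ m) {b d : ℤ} {p : ℝ × ℝ} (hd : 1 ≤ d)
    (hdN : 2*d < ℓ*m)
    (t1 : lf (2*(π/((ℓ:ℝ)*m))*(b:ℝ)) p = 1)
    (t2 : lf (2*(π/((ℓ:ℝ)*m))*((b:ℝ)+(d:ℝ))) p = 1)
    (n2 : lf (2*(π/((ℓ:ℝ)*m))*((b:ℝ)+(m:ℝ))) p ≤ 1) :
    d ≤ m ∧ p = pt (π/((ℓ:ℝ)*m)) (b:ℝ) (d:ℝ) := by
  have he := e_pos hℓ hm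
  have hN := NR_pos hℓ hm
  set e : ℝ := π/((ℓ:ℝ)*m) with hedef
  have hcos : 0 < cos (e*(d:ℝ)) := cos_es_pos hℓ hm hd hdN
  have hsin : 0 < sin (e*(d:ℝ)) := sin_es_pos hℓ hm hd (by omega)
  have hp : p = pt e (b:ℝ) (d:ℝ) := eq_pt_of_two_lines hsin.ne' hcos.ne' t1 t2
  refine ⟨?_, hp⟩
  rw [hp] at n2
  rw [lf_pt _ _ _ _ hcos.ne'] at n2
  rw [div_le_one hcos] at n2
  have harg : e*(2*(b:ℝ)+(d:ℝ)) - 2*e*((b:ℝ)+(m:ℝ)) = e*(d:ℝ) - 2*e*(m:ℝ) := by ring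
  rw [harg] at n2
  -- now a pure real-analysis argument
  set x : ℝ := e*(d:ℝ) with hx
  set β : ℝ := 2*e*(m:ℝ) with hβ
  have hx0 : 0 < x := mul_pos he (by exact_mod_cast hd)
  have hx2 : x < π/2 := by
    have hdr : 2*(d:ℝ) < (ℓ:ℝ)*m := by exact_mod_cast hdN
    have h1 : e * (2*(d:ℝ)) < e * ((ℓ:ℝ)*m) := mul_lt_mul_of_pos_left hdr he
    have h2 : e * ((ℓ:ℝ)*m) = π := by rw [hedef]; field_simp
    rw [h2] at h1
    rw [hx]; linarith
  have hβ0 : 0 < β := by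
    have : (0:ℝ) < m := by exact_mod_cast hm
    positivity
  by_contra hcon
  push_neg at hcon
  -- hcon : m < d, want contradiction with n2 : cos (x - β) ≤ cos x
  have hmd : (m:ℝ) < (d:ℝ) := by exact_mod_cast hcon
  have habs : |x - β| < x := by
    rw [abs_lt]
    constructor
    · -- -(x) < x - β  ⇔  β < 2x  ⇔  2em < 2ed
      have : β < 2*x := by
        rw [hβ, hx]
        have := mul_lt_mul_of_pos_left hmd he
        nlinarith
      linarith
    · linarith
  have hlt : cos x < cos (|x - β|) := by
    apply Real.strictAntiOn_cos
    · constructor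
      · exact abs_nonneg _
      · linarith [habs, hx2, Real.pi_gt_three]
    · constructor
      · linarith
      · linarith [Real.pi_gt_three]
    · exact habs
  rw [Real.cos_abs] at hlt
  linarith

lemma lf_add_pi (c : ℝ) (x : ℝ × ℝ) : lf (c + π) x = -(lf c x) := by
  simp only [lf_apply, Real.cos_add_pi, Real.sin_add_pi]
  ring

lemma cross_helper (hℓ : 3 ≤ ℓ) (hm : 1 ≤ m) {p : ℝ × ℝ} {a a' : ℕ}
    (ha : a < ℓ*m) (ha' : a' < ℓ*m) (hlt : a < a')
    (t1 : lf (2*(π/((ℓ:ℝ)*m))*(a:ℝ)) p = 1)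
    (t2 : lf (2*(π/((ℓ:ℝ)*m))*(a':ℝ)) p = 1)
    (n1 : lf (2*(π/((ℓ:ℝ)*m))*((a:ℝ)+(m:ℝ))) p ≤ 1)
    (n2 : lf (2*(π/((ℓ:ℝ)*m))*((a':ℝ)+(m:ℝ))) p ≤ 1) :
    ∃ j s : ℕ, j < ℓ*m ∧ 1 ≤ s ∧ s ≤ m ∧ p = pt (π/((ℓ:ℝ)*m)) (j:ℝ) (s:ℝ) := by
  have he := e_pos hℓ hm
  have hN := NR_pos hℓ hm
  set e : ℝ := π/((ℓ:ℝ)*m) with hedef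
  set d₀ : ℕ := a' - a with hd₀
  have hd₀1 : 1 ≤ d₀ := by omega
  have hd₀N : d₀ < ℓ*m := by omega
  rcases lt_trichotomy (2*d₀) (ℓ*m) with hcase | hcase | hcase
  · -- use (a, d₀)
    have t2' : lf (2*e*((a:ℝ)+(d₀:ℝ))) p = 1 := by
      have : (a:ℝ)+(d₀:ℝ) = (a':ℝ) := by
        have : a + d₀ = a' := by omega
        exact_mod_cast this
      rw [this]; exact t2
    have hcore := core_cross hℓ hm (b := (a:ℤ)) (d := (d₀:ℤ))
      (by exact_mod_cast hd₀1) (by exact_mod_cast hcase)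
      (by push_cast; push_cast at t1; exact t1)
      (by push_cast; push_cast at t2'; exact t2')
      (by push_cast; push_cast at n1; exact n1)
    refine ⟨a, d₀, ha, hd₀1, by exact_mod_cast hcore.1, by
      have := hcore.2; push_cast at this ⊢; exact this⟩
  · -- parallel lines: contradiction
    exfalso
    have hang : 2*e*(a':ℝ) = 2*e*(a:ℝ) + π := by
      have hr : (a':ℝ) = (a:ℝ) + (d₀:ℝ) := by
        have : a + d₀ = a' := by omega
        exact_mod_cast this.symm
      have hd : 2*e*(d₀:ℝ) = π := by
        have hdr : 2*(d₀:ℝ) = (ℓ:ℝ)*m := by exact_mod_cast hcase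
        rw [hedef]
        calc 2*(π/((ℓ:ℝ)*m))*(d₀:ℝ) = (π/((ℓ:ℝ)*m)) * (2*(d₀:ℝ)) := by ring
          _ = (π/((ℓ:ℝ)*m)) * ((ℓ:ℝ)*m) := by rw [hdr]
          _ = π := div_mul_cancel₀ _ hN.ne'
      rw [hr]; linarith [hd]
    rw [hang, lf_add_pi, t1] at t2
    linarith
  · -- use (a', ℓ*m - d₀)
    set d : ℕ := ℓ*m - d₀ with hd
    have hd1 : 1 ≤ d := by omega
    have hdN : 2*d < ℓ*m := by omega
    have t2' : lf (2*e*((a':ℝ)+(d:ℝ))) p = 1 := by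
      have harg : 2*e*((a':ℝ)+(d:ℝ)) = 2*e*(a:ℝ) + (1:ℤ)*(2*π) := by
        have h1 : (a':ℝ) + (d:ℝ) = (a:ℝ) + ((ℓ*m : ℕ):ℝ) := by
          have : a' + d = a + ℓ*m := by omega
          exact_mod_cast this
        have h2 : 2*e*((ℓ*m : ℕ):ℝ) = 2*π := by
          have : ((ℓ*m : ℕ):ℝ) = (ℓ:ℝ)*m := by push_cast; ring
          rw [this, hedef]; field_simp
        rw [h1]
        have expand : 2*e*((a:ℝ)+((ℓ*m : ℕ):ℝ)) = 2*e*(a:ℝ) + 2*e*((ℓ*m : ℕ):ℝ) := by ring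
        rw [expand, h2]
        ring
      rw [harg, lf_periodic]
      exact t1
    have hcore := core_cross hℓ hm (b := (a':ℤ)) (d := (d:ℤ))
      (by exact_mod_cast hd1) (by exact_mod_cast hdN)
      (by push_cast; push_cast at t2; exact t2)
      (by push_cast; push_cast at t2'; exact t2')
      (by push_cast; push_cast at n2; exact n2)
    refine ⟨a', d, ha', hd1, by exact_mod_cast hcore.1, by
      have := hcore.2; push_cast at this ⊢; exact this⟩

lemma vertex_mem (hℓ : 3 ≤ ℓ) (hm : 1 ≤ m) {p : ℝ × ℝ}
    (hv : IsSubdivVertex (fun i : Fin m => Cgon ℓ (2 * π * (i : ℕ) / (ℓ * m))) p) :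
    ∃ j s : ℕ, j < ℓ*m ∧ 1 ≤ s ∧ s ≤ m ∧ p = pt (π/((ℓ:ℝ)*m)) (j:ℝ) (s:ℝ) := by
  classical
  have hm0 : 0 < m := hm
  have he := e_pos hℓ hm
  have hN := NR_pos hℓ hm
  set e : ℝ := π/((ℓ:ℝ)*m) with hedef
  unfold IsSubdivVertex at hv
  have hv' : ∀ x : ℝ × ℝ,
      x ∈ (⋂ j ∈ {j | p ∈ (fun i : Fin m => Cgon ℓ (2 * π * (i : ℕ) / (ℓ * m))) j},
        minFace ((fun i : Fin m => Cgon ℓ (2 * π * (i : ℕ) / (ℓ * m))) j) p) → x = p := by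
    intro x hx
    rw [hv] at hx
    exact hx
  -- angle bookkeeping
  have hθ : ∀ (i : Fin m) (k : ℕ),
      2*π*(k:ℝ)/(ℓ:ℝ) + 2*π*((i:ℕ):ℝ)/((ℓ:ℝ)*m) = 2*e*((k*m+(i:ℕ) : ℕ):ℝ) := by
    intro i k
    rw [angle_eq hℓ hm k ((i:ℕ):ℝ), hedef]
    congr 1
    push_cast
    ring
  have hmem : ∀ (i : Fin m), p ∈ Cgon ℓ (2*π*((i:ℕ):ℝ)/((ℓ:ℝ)*m)) → ∀ k : ℕ, k < ℓ →
      lf (2*e*((k*m+(i:ℕ) : ℕ):ℝ)) p ≤ 1 := by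
    intro i hi k hk
    have h1 := mem_Cgon_iff.1 hi k hk
    rwa [hθ i k] at h1
  have hnbr : ∀ (i : Fin m), p ∈ Cgon ℓ (2*π*((i:ℕ):ℝ)/((ℓ:ℝ)*m)) → ∀ k : ℕ,
      lf (2*e*(((k*m+(i:ℕ) : ℕ):ℝ)+(m:ℝ))) p ≤ 1 := by
    intro i hi k
    have h1 := Cgon_le_int (show 0 < ℓ by omega) hi ((k:ℤ)+1)
    have h3 : (((k:ℤ)+1 : ℤ):ℝ) = ((k+1 : ℕ):ℝ) := by push_cast; ring
    rw [show 2 * π * (((k:ℤ)+1 : ℤ):ℝ) / (ℓ:ℝ) = 2 * π * ((k+1 : ℕ):ℝ) / (ℓ:ℝ) by rw [h3]] at h1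
    rw [hθ i (k+1)] at h1
    have h4 : (((k+1)*m+(i:ℕ) : ℕ):ℝ) = ((k*m+(i:ℕ) : ℕ):ℝ) + (m:ℝ) := by push_cast; ring
    rwa [h4] at h1
  -- Step 1: some polygon contains p
  have hSne : ∃ i : Fin m, p ∈ Cgon ℓ (2*π*((i:ℕ):ℝ)/((ℓ:ℝ)*m)) := by
    by_contra hno
    push_neg at hno
    have h2 : (p + (1,0)) ∈ (⋂ j ∈ {j | p ∈ (fun i : Fin m =>
        Cgon ℓ (2 * π * (i : ℕ) / (ℓ * m))) j},
        minFace ((fun i : Fin m => Cgon ℓ (2 * π * (i : ℕ) / (ℓ * m))) j) p) := by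
      simp only [Set.mem_iInter, Set.mem_setOf_eq]
      intro i hi
      exact absurd hi (hno i)
    have h3 := hv' _ h2
    have h4 : p.1 + 1 = p.1 := congrArg Prod.fst h3
    linarith
  by_cases htwo : ∃ (i₁ i₂ : Fin m) (k₁ k₂ : ℕ), k₁ < ℓ ∧ k₂ < ℓ ∧
      p ∈ Cgon ℓ (2*π*((i₁:ℕ):ℝ)/((ℓ:ℝ)*m)) ∧ p ∈ Cgon ℓ (2*π*((i₂:ℕ):ℝ)/((ℓ:ℝ)*m)) ∧
      lf (2*e*((k₁*m+(i₁:ℕ) : ℕ):ℝ)) p = 1 ∧ lf (2*e*((k₂*m+(i₂:ℕ) : ℕ):ℝ)) p = 1 ∧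
      k₁*m+(i₁:ℕ) ≠ k₂*m+(i₂:ℕ)
  · -- crossing case
    obtain ⟨i₁, i₂, k₁, k₂, hk₁, hk₂, hpi₁, hpi₂, ht₁, ht₂, hne⟩ := htwo
    have ha₁ : k₁*m+(i₁:ℕ) < ℓ*m := by
      have h5 : k₁*m+(i₁:ℕ) < k₁*m + m := by omega
      have h6 : k₁*m + m = (k₁+1)*m := by ring
      have h7 : (k₁+1)*m ≤ ℓ*m := Nat.mul_le_mul_right _ hk₁
      omega
    have ha₂ : k₂*m+(i₂:ℕ) < ℓ*m := by
      have h5 : k₂*m+(i₂:ℕ) < k₂*m + m := by omega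
      have h6 : k₂*m + m = (k₂+1)*m := by ring
      have h7 : (k₂+1)*m ≤ ℓ*m := Nat.mul_le_mul_right _ hk₂
      omega
    rcases lt_or_gt_of_ne hne with hlt | hlt
    · exact cross_helper hℓ hm ha₁ ha₂ hlt ht₁ ht₂ (hnbr i₁ hpi₁ k₁) (hnbr i₂ hpi₂ k₂)
    · exact cross_helper hℓ hm ha₂ ha₁ hlt ht₂ ht₁ (hnbr i₂ hpi₂ k₂) (hnbr i₁ hpi₁ k₁)
  · -- no two distinct tight lines: contradiction with being a vertex
    exfalso
    push_neg at htwo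
    obtain ⟨a₀, hall⟩ : ∃ a₀ : ℕ, ∀ (i : Fin m) (k : ℕ), k < ℓ →
        p ∈ Cgon ℓ (2*π*((i:ℕ):ℝ)/((ℓ:ℝ)*m)) →
        lf (2*e*((k*m+(i:ℕ) : ℕ):ℝ)) p = 1 → k*m+(i:ℕ) = a₀ := by
      by_cases ht : ∃ (i : Fin m) (k : ℕ), k < ℓ ∧
          p ∈ Cgon ℓ (2*π*((i:ℕ):ℝ)/((ℓ:ℝ)*m)) ∧ lf (2*e*((k*m+(i:ℕ) : ℕ):ℝ)) p = 1
      · obtain ⟨ia, ka, hka, hpa, hta⟩ := ht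
        exact ⟨ka*m+(ia:ℕ), fun i k hk hp ht' => htwo i ia k ka hk hka hp hpa ht' hta⟩
      · push_neg at ht
        exact ⟨0, fun i k hk hp ht' => absurd ht' (ht i k hk hp)⟩
    set v : ℝ × ℝ := (-sin (2*e*(a₀:ℝ)), cos (2*e*(a₀:ℝ))) with hvdef
    have hlf_v : ∀ c : ℝ, lf c v = sin (c - 2*e*(a₀:ℝ)) := by
      intro c
      simp only [lf_apply, hvdef]
      rw [Real.sin_sub]
      ring
    haveI : Nonempty (Fin m × Fin ℓ) := ⟨(⟨0, hm0⟩, ⟨0, by omega⟩)⟩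
    set g : Fin m × Fin ℓ → ℝ := fun q =>
      if p ∈ Cgon ℓ (2*π*(((q.1:ℕ)):ℝ)/((ℓ:ℝ)*m)) ∧
          lf (2*e*(((q.2:ℕ)*m+(q.1:ℕ) : ℕ):ℝ)) p < 1
      then 1 - lf (2*e*(((q.2:ℕ)*m+(q.1:ℕ) : ℕ):ℝ)) p else 1 with hg
    set δ : ℝ := Finset.inf' Finset.univ Finset.univ_nonempty g with hδ
    have hδpos : 0 < δ := by
      rw [hδ, Finset.lt_inf'_iff]
      intro q _
      rw [hg]
      dsimp only
      split_ifs with h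
      · linarith [h.2]
      · norm_num
    have hδle : ∀ (i : Fin m) (k : ℕ), k < ℓ →
        p ∈ Cgon ℓ (2*π*((i:ℕ):ℝ)/((ℓ:ℝ)*m)) → lf (2*e*((k*m+(i:ℕ) : ℕ):ℝ)) p < 1 →
        δ ≤ 1 - lf (2*e*((k*m+(i:ℕ) : ℕ):ℝ)) p := by
      intro i k hk hp hlt
      have h1 := Finset.inf'_le g (Finset.mem_univ ((i, (⟨k, hk⟩ : Fin ℓ)) : Fin m × Fin ℓ))
      rw [hg] at h1
      dsimp only at h1
      rw [if_pos ⟨hp, hlt⟩] at h1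
      exact h1
    have hpm : ∀ (σ : ℝ), (σ = 1 ∨ σ = -1) → ∀ i : Fin m,
        p ∈ Cgon ℓ (2*π*((i:ℕ):ℝ)/((ℓ:ℝ)*m)) →
        p + (σ*δ) • v ∈ Cgon ℓ (2*π*((i:ℕ):ℝ)/((ℓ:ℝ)*m)) := by
      intro σ hσ i hi
      rw [mem_Cgon_iff]
      intro k hk
      rw [hθ i k, map_add, map_smul, smul_eq_mul, hlf_v]
      have hle := hmem i hi k hk
      rcases eq_or_lt_of_le hle with heq | hlt
      · have hidx : k*m+(i:ℕ) = a₀ := hall i k hk hi heq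
        rw [heq, hidx, sub_self, Real.sin_zero, mul_zero, add_zero]
      · have hδle' := hδle i k hk hi hlt
        have hs1 := Real.sin_le_one (2*e*((k*m+(i:ℕ) : ℕ):ℝ) - 2*e*(a₀:ℝ))
        have hs2 := Real.neg_one_le_sin (2*e*((k*m+(i:ℕ) : ℕ):ℝ) - 2*e*(a₀:ℝ))
        rcases hσ with h | h <;> rw [h] <;> nlinarith
    have hmemP := hpm 1 (Or.inl rfl)
    have hmemM := hpm (-1) (Or.inr rfl)
    have hseg : p ∈ openSegment ℝ (p + ((1:ℝ)*δ) • v) (p + ((-1:ℝ)*δ) • v) := by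
      refine ⟨1/2, 1/2, by norm_num, by norm_num, by norm_num, ?_⟩
      module
    have hq : (p + ((1:ℝ)*δ) • v) ∈ (⋂ j ∈ {j | p ∈ (fun i : Fin m =>
        Cgon ℓ (2 * π * (i : ℕ) / (ℓ * m))) j},
        minFace ((fun i : Fin m => Cgon ℓ (2 * π * (i : ℕ) / (ℓ * m))) j) p) := by
      simp only [Set.mem_iInter, Set.mem_setOf_eq]
      intro i hi
      exact mem_minFace_of_openSegment (hmemP i hi) (hmemM i hi) hseg
    have hq' := hv' _ hq
    have h8 : ((1:ℝ)*δ) • v = 0 := by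
      have h9 : p + ((1:ℝ)*δ) • v = p + 0 := by rw [add_zero]; exact hq'
      exact add_left_cancel h9
    rw [smul_eq_zero] at h8
    rcases h8 with h8 | h8
    · rw [one_mul] at h8
      exact hδpos.ne' h8
    · have hc := congrArg Prod.snd h8
      have hs := congrArg Prod.fst h8
      simp only [hvdef, Prod.fst_zero, Prod.snd_zero] at hc hs
      nlinarith [Real.sin_sq_add_cos_sq (2*e*(a₀:ℝ))]

lemma pt_inj (hℓ : 3 ≤ ℓ) (hm : 1 ≤ m) {j s j' s' : ℕ} (hj : j < ℓ*m) (hs1 : 1 ≤ s)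
    (hs2 : s ≤ m) (hj' : j' < ℓ*m) (hs1' : 1 ≤ s') (hs2' : s' ≤ m)
    (h : pt (π/((ℓ:ℝ)*m)) (j:ℝ) (s:ℝ) = pt (π/((ℓ:ℝ)*m)) (j':ℝ) (s':ℝ)) :
    j = j' ∧ s = s' := by
  have he := e_pos hℓ hm
  have hN := NR_pos hℓ hm
  set e : ℝ := π/((ℓ:ℝ)*m) with hedef
  have hcs := cos_es_pos' hℓ hm hs1 hs2
  have hcs' := cos_es_pos' hℓ hm hs1' hs2'
  rw [← hedef] at hcs hcs'
  have h1 := congrArg Prod.fst h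
  have h2 := congrArg Prod.snd h
  simp only [pt] at h1 h2
  rw [div_eq_div_iff hcs.ne' hcs'.ne'] at h1 h2
  -- the radii agree
  have hP1 := Real.sin_sq_add_cos_sq (e*(2*(j:ℝ)+(s:ℝ)))
  have hP2 := Real.sin_sq_add_cos_sq (e*(2*(j':ℝ)+(s':ℝ)))
  have h3 : cos (e*(s':ℝ))^2 = cos (e*(s:ℝ))^2 := by
    linear_combination (cos (e*(2*(j:ℝ)+(s:ℝ))) * cos (e*(s':ℝ))
        + cos (e*(2*(j':ℝ)+(s':ℝ))) * cos (e*(s:ℝ))) * h1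
      + (sin (e*(2*(j:ℝ)+(s:ℝ))) * cos (e*(s':ℝ))
        + sin (e*(2*(j':ℝ)+(s':ℝ))) * cos (e*(s:ℝ))) * h2
      - cos (e*(s':ℝ))^2 * hP1 + cos (e*(s:ℝ))^2 * hP2
  have h4 : cos (e*(s:ℝ)) = cos (e*(s':ℝ)) := by
    have h5 : (cos (e*(s:ℝ)) - cos (e*(s':ℝ))) * (cos (e*(s:ℝ)) + cos (e*(s':ℝ))) = 0 := by
      linear_combination -h3
    rcases mul_eq_zero.1 h5 with h6 | h6
    · linarith
    · linarith
  -- hence s = s'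
  have hs_le : ∀ t : ℕ, 1 ≤ t → t ≤ m → e*(t:ℝ) ∈ Set.Icc 0 π := by
    intro t ht1 ht2
    constructor
    · positivity
    · have htr : (t:ℝ) ≤ (ℓ:ℝ)*m := by
        have : (t:ℕ) ≤ ℓ*m := by nlinarith
        exact_mod_cast this
      have := mul_le_mul_of_nonneg_left htr he.le
      have heq2 : e * ((ℓ:ℝ)*m) = π := by rw [hedef]; field_simp
      linarith
  have hss : e*(s:ℝ) = e*(s':ℝ) :=
    Real.injOn_cos (hs_le s hs1 hs2) (hs_le s' hs1' hs2') h4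
  have hss' : s = s' := by
    have : (s:ℝ) = (s':ℝ) := mul_left_cancel₀ he.ne' hss
    exact_mod_cast this
  subst hss'
  refine ⟨?_, rfl⟩
  -- now the angles agree
  rw [← h4] at h1 h2
  have h1' : cos (e*(2*(j:ℝ)+(s:ℝ))) = cos (e*(2*(j':ℝ)+(s:ℝ))) :=
    mul_right_cancel₀ hcs.ne' h1
  have h2' : sin (e*(2*(j:ℝ)+(s:ℝ))) = sin (e*(2*(j':ℝ)+(s:ℝ))) :=
    mul_right_cancel₀ hcs.ne' h2
  have hcos1 : cos (e*(2*(j:ℝ)+(s:ℝ)) - e*(2*(j':ℝ)+(s:ℝ))) = 1 := by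
    rw [Real.cos_sub, h1', h2']
    rw [← Real.sin_sq_add_cos_sq (e*(2*(j':ℝ)+(s:ℝ)))]
    ring
  have harg : e*(2*(j:ℝ)+(s:ℝ)) - e*(2*(j':ℝ)+(s:ℝ)) = 2*e*((j:ℝ)-(j':ℝ)) := by ring
  rw [harg] at hcos1
  have hbound : |2*e*((j:ℝ)-(j':ℝ))| < 2*π := by
    rw [abs_lt]
    have hjr : (j:ℝ) < (ℓ:ℝ)*m := by exact_mod_cast hj
    have hjr' : (j':ℝ) < (ℓ:ℝ)*m := by exact_mod_cast hj'
    have hj0 : (0:ℝ) ≤ (j:ℝ) := by positivity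
    have hj0' : (0:ℝ) ≤ (j':ℝ) := by positivity
    have heq2 : e * ((ℓ:ℝ)*m) = π := by rw [hedef]; field_simp
    constructor
    · nlinarith
    · nlinarith
  rw [abs_lt] at hbound
  have := (Real.cos_eq_one_iff_of_lt_of_lt hbound.1 hbound.2).1 hcos1
  have hj_eq : (j:ℝ) = (j':ℝ) := by
    have h7 : (j:ℝ) - (j':ℝ) = 0 := by
      rcases mul_eq_zero.1 this with h8 | h8
      · rcases mul_eq_zero.1 h8 with h9 | h9
        · norm_num at h9
        · exact absurd h9 he.ne'
      · exact h8
    linarith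
  exact_mod_cast hj_eq

end Main

/-- The subdivision of ℝ² induced by the m rotated regular ℓ-gons
C(2πi/(ℓm)), 0 ≤ i < m, has exactly ℓ·m² vertices. -/
theorem rotated_gons_subdivision_vertices (ℓ m : ℕ) (hℓ : 3 ≤ ℓ) (hm : 1 ≤ m) :
    {p : ℝ × ℝ | IsSubdivVertex
        (fun i : Fin m => Cgon ℓ (2 * Real.pi * (i : ℕ) / (ℓ * m))) p}.ncard
      = ℓ * m ^ 2 := by
  classical
  have hset : {p : ℝ × ℝ | IsSubdivVertex
        (fun i : Fin m => Cgon ℓ (2 * Real.pi * (i : ℕ) / (ℓ * m))) p}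
      = (fun q : ℕ × ℕ => pt (Real.pi/((ℓ:ℝ)*m)) (q.1:ℝ) (q.2:ℝ)) ''
          ↑(Finset.range (ℓ*m) ×ˢ Finset.Icc 1 m) := by
    ext p
    simp only [Set.mem_setOf_eq, Set.mem_image, Finset.mem_coe, Finset.mem_product,
      Finset.mem_range, Finset.mem_Icc]
    constructor
    · intro hv
      obtain ⟨j, s, hj, hs1, hs2, hp⟩ := vertex_mem hℓ hm hv
      exact ⟨(j, s), ⟨hj, hs1, hs2⟩, hp.symm⟩
    · rintro ⟨⟨j, s⟩, ⟨hj, hs1, hs2⟩, rfl⟩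
      exact pt_isVertex hℓ hm hj hs1 hs2
  rw [hset]
  rw [Set.ncard_image_of_injOn (by
    rintro ⟨j, s⟩ hq ⟨j', s'⟩ hq' h
    simp only [Finset.mem_coe, Finset.mem_product, Finset.mem_range, Finset.mem_Icc] at hq hq'
    obtain ⟨h1, h2⟩ := pt_inj hℓ hm hq.1 hq.2.1 hq.2.2 hq'.1 hq'.2.1 hq'.2.2 h
    simp [h1, h2])]
  rw [Set.ncard_coe_finset, Finset.card_product, Finset.card_range, Nat.card_Icc]
  have : m + 1 - 1 = m := by omega
  rw [this]
  ring
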